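/- Let A be a semi-algebraic subset of ℝ^p × ℝ^{n−p} with p < n such that (i) the closure of A is compact and satisfies Condition (F) with parameter ρ₀, and (ii) A = {(r, x', x_n) : (r, x') ∈ B, ξ(r,x') ≤ x_n ≤ ξ'(r,x')} for some semi-algebraic set B ⊆ ℝ^{n−1} and continuous semi-algebraic functions ξ < ξ' on B. Then: (1) for every point P ∈ B̄ ∩ (H₁ ∪ ⋯ ∪ H_p) ∩ pr₂^{-1}(V₀), (ξ' − ξ)(Q) → 0 as Q ∈ B tends to P; and (2) for every 0 < ρ < ρ₀, every i = 1,…,p, and every ε > 0, there is δ with 0 < δ < ρ₀ such that for Q ∈ B ∩ pr₂^{-1}({|r_j| ≤ ρ for all j}), 0 < |r_i(Q)| < δ implies (ξ' − ξ)(Q) < ε. -/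

import Mathlib

/-!
Common definitions: semi-algebraic sets and maps, dimension via the Zariski closure,
Nash submanifolds and Nash maps, generically defined differential forms and their
(absolute and oriented) integrals, faces and (strict) allowability, permissible blow-ups
(encoded combinatorially through their fans of monomial charts), logarithmic forms, and
the complex (admissible) setting.
-/

open MeasureTheory Set
open scoped ENNReal NNReal Topology

noncomputable section

/-- `ℝ^ι` as a Euclidean space. -/
abbrev Euc (ι : Type) [Fintype ι] : Type := EuclideanSpace ℝ ι

namespace SA

variable {ι κ : Type} [Fintype ι] [Fintype κ]

/-- A subset of `ℝ^ι` is semi-algebraic if it is a finite union of basic sets,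
each defined by finitely many polynomial equations and strict inequalities. -/
def IsSemialgebraic (S : Set (Euc ι)) : Prop :=
  ∃ (N : ℕ) (P Q : Fin N → Finset (MvPolynomial ι ℝ)),
    S = ⋃ a : Fin N, {x | (∀ f ∈ P a, MvPolynomial.eval (fun i => x i) f = 0) ∧
      ∀ g ∈ Q a, 0 < MvPolynomial.eval (fun i => x i) g}

/-- The ideal of polynomials vanishing on a subset of `ℝ^ι`. -/
def vanishingIdeal (S : Set (Euc ι)) : Ideal (MvPolynomial ι ℝ) where
  carrier := {f | ∀ x ∈ S, MvPolynomial.eval (fun i => x i) f = 0}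
  zero_mem' := by intro x _; simp
  add_mem' := by intro a b ha hb x hx; simp [ha x hx, hb x hx]
  smul_mem' := by intro c a ha x hx; simp [ha x hx]

/-- The (real) Zariski closure of a subset of `ℝ^ι`. -/
def zariskiClosure (S : Set (Euc ι)) : Set (Euc ι) :=
  {x | ∀ f ∈ vanishingIdeal S, MvPolynomial.eval (fun i => x i) f = 0}

/-- The dimension of a semi-algebraic set: the Krull dimension of the coordinate ring
of its Zariski closure. -/
def dim (S : Set (Euc ι)) : WithBot ℕ∞ :=
  ringKrullDim (MvPolynomial ι ℝ ⧸ vanishingIdeal S)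

/-- Projection of `ℝ^(ι ⊕ κ)` onto the first group of coordinates. -/
def projL (z : Euc (ι ⊕ κ)) : Euc ι := WithLp.toLp 2 (fun i => z (Sum.inl i))

/-- Projection of `ℝ^(ι ⊕ κ)` onto the second group of coordinates. -/
def projR (z : Euc (ι ⊕ κ)) : Euc κ := WithLp.toLp 2 (fun j => z (Sum.inr j))

/-- A map defined on a semi-algebraic set is semi-algebraic if its graph is. -/
def IsSemialgebraicOn (S : Set (Euc ι)) (f : Euc ι → Euc κ) : Prop :=
  IsSemialgebraic {z : Euc (ι ⊕ κ) | projL z ∈ S ∧ projR z = f (projL z)}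

/-- A real-valued function on a semi-algebraic set is semi-algebraic if its graph is. -/
def IsSemialgebraicFunOn (S : Set (Euc ι)) (f : Euc ι → ℝ) : Prop :=
  IsSemialgebraic {z : Euc (ι ⊕ Fin 1) | projL z ∈ S ∧ z (Sum.inr 0) = f (projL z)}

/-- `M` is a `d`-dimensional smooth submanifold of `ℝ^ι`: near each of its points it can be
straightened, by a diffeomorphism between open sets, onto a `d`-dimensional coordinate
subspace. -/
def IsSmoothSubmanifold (d : ℕ) (M : Set (Euc ι)) : Prop :=
  ∀ x ∈ M, ∃ (U V : Set (Euc ι)) (φ ψ : Euc ι → Euc ι) (J : Finset ι),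
    IsOpen U ∧ x ∈ U ∧ IsOpen V ∧
    ContDiffOn ℝ ((⊤ : ℕ∞) : WithTop ℕ∞) φ U ∧ ContDiffOn ℝ ((⊤ : ℕ∞) : WithTop ℕ∞) ψ V ∧
    Set.MapsTo φ U V ∧ (∀ y ∈ U, ψ (φ y) = y) ∧ (∀ y ∈ V, φ (ψ y) = y) ∧
    J.card = d ∧ φ '' (U ∩ M) = V ∩ {y | ∀ i ∉ J, y i = 0}

/-- A Nash submanifold of `ℝ^ι` of dimension `d`: a semi-algebraic subset which is a
`d`-dimensional smooth submanifold (such a set is automatically Nash). -/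
def IsNashSubmanifold (d : ℕ) (M : Set (Euc ι)) : Prop :=
  IsSemialgebraic M ∧ IsSmoothSubmanifold d M

/-- A map is smooth on a subset `S` if near each point of `S` it admits a smooth local
extension. -/
def SmoothOnSet (S : Set (Euc ι)) (f : Euc ι → Euc κ) : Prop :=
  ∀ x ∈ S, ∃ (U : Set (Euc ι)) (g : Euc ι → Euc κ), IsOpen U ∧ x ∈ U ∧
    ContDiffOn ℝ ((⊤ : ℕ∞) : WithTop ℕ∞) g U ∧ Set.EqOn f g (S ∩ U)

/-- A Nash map on `S`: semi-algebraic and smooth on `S`. -/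
def IsNashMapOn (S : Set (Euc ι)) (f : Euc ι → Euc κ) : Prop :=
  IsSemialgebraicOn S f ∧ SmoothOnSet S f

/-- A Nash (real-valued) function on `S`: semi-algebraic and smooth on `S`. -/
def IsNashFunOn (S : Set (Euc ι)) (f : Euc ι → ℝ) : Prop :=
  IsSemialgebraicFunOn S f ∧
  ∀ x ∈ S, ∃ (U : Set (Euc ι)) (g : Euc ι → ℝ), IsOpen U ∧ x ∈ U ∧
    ContDiffOn ℝ ((⊤ : ℕ∞) : WithTop ℕ∞) g U ∧ Set.EqOn f g (S ∩ U)

/-- A Nash diffeomorphism from `U` onto `U'`: a bijective Nash map with Nash inverse. -/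
def IsNashDiffeoOn (U : Set (Euc ι)) (U' : Set (Euc κ)) (f : Euc ι → Euc κ) : Prop :=
  IsNashMapOn U f ∧ Set.BijOn f U U' ∧
    ∃ g : Euc κ → Euc ι, IsNashMapOn U' g ∧ Set.InvOn g f U U'

/-- A smooth `m`-form on `Ω ⊆ ℝ^ι`, encoded as a function of a point and an `m`-tuple of
vectors: at each point of `Ω` it is an alternating multilinear form, and for each fixed
tuple of vectors it depends smoothly on the point. -/
def IsSmoothForm (m : ℕ) (Ω : Set (Euc ι)) (ψ : Euc ι → (Fin m → Euc ι) → ℝ) : Prop :=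
  (∀ x ∈ Ω, ∃ A : AlternatingMap ℝ (Euc ι) ℝ (Fin m), ψ x = ⇑A) ∧
  ∀ v : Fin m → Euc ι, ContDiffOn ℝ ((⊤ : ℕ∞) : WithTop ℕ∞) (fun x => ψ x v) Ω

/-- Pull-back of an `m`-form `ψ` along a map `h`, differentiated within the set `U`. -/
def pullback {m : ℕ} (h : Euc ι → Euc κ) (U : Set (Euc ι))
    (ψ : Euc κ → (Fin m → Euc κ) → ℝ) : Euc ι → (Fin m → Euc ι) → ℝ :=
  fun x v => ψ (h x) fun j => fderivWithin ℝ h U x (v j)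

/-- The orthonormal `m`-frames tangent to `U` at `x`. -/
def tangentFrames (m : ℕ) (U : Set (Euc ι)) (x : Euc ι) : Set (Fin m → Euc ι) :=
  {v | Orthonormal ℝ v ∧ ∀ j, v j ∈ tangentConeAt ℝ U x}

/-- The integral `∫_U |φ|` of the density of an `m`-form `φ` over `U`: the integral, with
respect to the `m`-dimensional Hausdorff measure, of the norm of `φ` on tangent
orthonormal frames. -/
def absIntegral (m : ℕ) (U : Set (Euc ι)) (φ : Euc ι → (Fin m → Euc ι) → ℝ) : ℝ≥0∞ :=
  ∫⁻ x in U, ENNReal.ofReal (⨆ v ∈ tangentFrames m U x, |φ x v|) ∂μH[(m : ℝ)]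

/-- An orientation of an `m`-dimensional submanifold `U`, presented as a continuous choice
of tangent orthonormal `m`-frames. -/
def IsOrientationFrame (m : ℕ) (U : Set (Euc ι)) (o : Euc ι → Fin m → Euc ι) : Prop :=
  ContinuousOn o U ∧ ∀ x ∈ U, o x ∈ tangentFrames m U x

/-- The integral `∫_U φ` of an `m`-form `φ` over `U`, oriented by the frame `o`. -/
def orIntegral (m : ℕ) (U : Set (Euc ι)) (o : Euc ι → Fin m → Euc ι)
    (φ : Euc ι → (Fin m → Euc ι) → ℝ) : ℝ :=
  ∫ x in U, φ x (o x) ∂μH[(m : ℝ)]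

/-- The standard (positively oriented, orthonormal) frame of `ℝ^m`. -/
def stdFrame (m : ℕ) : Fin m → Euc (Fin m) := fun j => EuclideanSpace.single j 1

/-- `δ(f)`: the maximal cardinality of the finite fibres of `f` restricted to `S`
(`0` if every fibre is infinite). -/
def delta (S : Set (Euc ι)) (f : Euc ι → Euc κ) : ℕ :=
  sSup {k : ℕ | ∃ u ∈ f '' S, (S ∩ f ⁻¹' {u}).Finite ∧ (S ∩ f ⁻¹' {u}).ncard = k}

/-- A member of `Op(S)` for a semi-algebraic set `S` of dimension `≤ m`: if `dim S = m`, a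
dense open semi-algebraic subset `U ⊆ S` which is an `m`-dimensional Nash submanifold with
`dim (S ∖ U) < m`; integrals of `m`-forms over `S` are computed over such a `U`. By the
convention of the paper, if `dim S < m` the integral is set to `0`, i.e. `U = ∅`. -/
def PullbackDomain (m : ℕ) (S U : Set (Euc ι)) : Prop :=
  (dim S = ((m : ℕ∞) : WithBot ℕ∞) ∧ U ⊆ S ∧ (∃ O, IsOpen O ∧ U = S ∩ O) ∧
    IsSemialgebraic U ∧ IsNashSubmanifold m U ∧ dim (S \ U) < ((m : ℕ∞) : WithBot ℕ∞)) ∨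
  (dim S < ((m : ℕ∞) : WithBot ℕ∞) ∧ U = ∅)

/-- A domain over which the pull-back of an `m`-form along `h` is defined: a member of
`Op(S)` on which `h` is a Nash map. -/
def IntegralDomain (m : ℕ) (S U : Set (Euc ι)) (h : Euc ι → Euc κ) : Prop :=
  PullbackDomain m S U ∧ IsNashMapOn U h

/-- The face of `ℝ^(ι⊕κ)` cut out by the vanishing of the distinguished coordinates in `I`. -/
def face (κ : Type) [Fintype κ] (I : Finset ι) : Set (Euc (ι ⊕ κ)) :=
  {z | ∀ i ∈ I, z (Sum.inl i) = 0}

/-- Allowability: the intersection with every proper face has dimension strictly smaller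
than the dimension of the face. -/
def Allowable (C : Set (Euc (ι ⊕ κ))) : Prop :=
  ∀ I : Finset ι, I.Nonempty →
    dim (C ∩ face κ I) + ((I.card : ℕ∞) : WithBot ℕ∞) <
      (((Fintype.card ι + Fintype.card κ : ℕ) : ℕ∞) : WithBot ℕ∞)

/-- Strict allowability with respect to the face cut out by `I`: the Zariski closure of the
intersection contains no face. -/
def StrictlyAllowableWrt (C : Set (Euc (ι ⊕ κ))) (I : Finset ι) : Prop :=
  ∀ I' : Finset ι, ¬ (face κ I' ⊆ zariskiClosure (C ∩ face κ I))

/-- Strict allowability: strict allowability with respect to every face (including the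
ambient space itself). -/
def StrictlyAllowable (C : Set (Euc (ι ⊕ κ))) : Prop :=
  ∀ I : Finset ι, StrictlyAllowableWrt C I

/-- Almost strict allowability: strict allowability with respect to every proper face. -/
def AlmostStrictlyAllowable (C : Set (Euc (ι ⊕ κ))) : Prop :=
  ∀ I : Finset ι, I.Nonempty → StrictlyAllowableWrt C I

/-- The set of columns ("rays") of a matrix. -/
def raysOf {p : ℕ} (M : Matrix (Fin p) (Fin p) ℤ) : Finset (Fin p → ℤ) :=
  Finset.univ.image fun j i => M i j

/-- The set of columns of `M` indexed by `J`. -/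
def colSet {p : ℕ} (M : Matrix (Fin p) (Fin p) ℤ) (J : Finset (Fin p)) :
    Finset (Fin p → ℤ) :=
  J.image fun j i => M i j

/-- Star subdivision of a smooth fan (recorded through its maximal cones, each given by the
matrix of its ray generators) at the cone spanned by the rays in `R`. -/
def starSubdiv {p : ℕ} (F : Finset (Matrix (Fin p) (Fin p) ℤ)) (R : Finset (Fin p → ℤ)) :
    Finset (Matrix (Fin p) (Fin p) ℤ) :=
  F.filter (fun M => ¬ R ⊆ raysOf M) ∪
  (F.filter (fun M => R ⊆ raysOf M)).biUnion fun M =>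
    (Finset.univ.filter fun j : Fin p => (fun i => M i j) ∈ R).image fun j =>
      Matrix.updateCol M j fun i => ∑ v ∈ R, v i

/-- Successions of permissible blow-ups over a given stage, recorded combinatorially through
the fans of their monomial charts: each permissible blow-up is the star subdivision of the
fan at a face of codimension `≥ 2` (a cone spanned by at least two of the rays of a maximal
cone). -/
inductive IsBlowupTower (p : ℕ) :
    Finset (Matrix (Fin p) (Fin p) ℤ) → Finset (Matrix (Fin p) (Fin p) ℤ) → Prop
  | refl (F : Finset (Matrix (Fin p) (Fin p) ℤ)) : IsBlowupTower p F F
  | step (F₀ F : Finset (Matrix (Fin p) (Fin p) ℤ)) (h : IsBlowupTower p F₀ F)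
      (M : Matrix (Fin p) (Fin p) ℤ) (hM : M ∈ F) (J : Finset (Fin p)) (hJ : 2 ≤ J.card) :
      IsBlowupTower p F₀ (starSubdiv F (colSet M J))

/-- A succession of permissible blow-ups of the base space itself (whose fan consists of the
single standard cone, with ray matrix `1`). -/
def IsBlowupFan (p : ℕ) (F : Finset (Matrix (Fin p) (Fin p) ℤ)) : Prop :=
  IsBlowupTower p {1} F

/-- A monomial chart map `ℝ^p × ℝ^q → ℝ^p × ℝ^q` of a succession of permissible blow-ups:
the monomial map with (nonnegative) exponent matrix `M` on the first factor and the
identity on the second. -/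
def monMap (p q : ℕ) (M : Matrix (Fin p) (Fin p) ℤ) (z : Euc (Fin p ⊕ Fin q)) :
    Euc (Fin p ⊕ Fin q) :=
  WithLp.toLp 2 (Sum.elim (fun i => ∏ j : Fin p, z (Sum.inl j) ^ (M i j).toNat) fun j => z (Sum.inr j))

/-- The monomial map with integer exponent matrix `N` (a transition map between charts). -/
def monMapZ (p q : ℕ) (N : Matrix (Fin p) (Fin p) ℤ) (z : Euc (Fin p ⊕ Fin q)) :
    Euc (Fin p ⊕ Fin q) :=
  WithLp.toLp 2 (Sum.elim (fun i => ∏ j : Fin p, z (Sum.inl j) ^ (N i j)) fun j => z (Sum.inr j))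

/-- The locus where the monomial map with exponent matrix `N` is regular. -/
def transDomain (p q : ℕ) (N : Matrix (Fin p) (Fin p) ℤ) : Set (Euc (Fin p ⊕ Fin q)) :=
  {z | ∀ i j, N i j < 0 → z (Sum.inl j) ≠ 0}

/-- A family of subsets of the charts of the succession of blow-ups with fan `F` defines a
global subset iff it is compatible with the transition maps between charts. -/
def CompatibleFamily (p q : ℕ) (F : Finset (Matrix (Fin p) (Fin p) ℤ))
    (B : Matrix (Fin p) (Fin p) ℤ → Set (Euc (Fin p ⊕ Fin q))) : Prop :=
  ∀ M ∈ F, ∀ M' ∈ F, ∀ z ∈ transDomain p q (M'⁻¹ * M),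
    monMapZ p q (M'⁻¹ * M) z ∈ transDomain p q (M⁻¹ * M') →
    monMapZ p q (M⁻¹ * M') (monMapZ p q (M'⁻¹ * M) z) = z →
    (z ∈ B M ↔ monMapZ p q (M'⁻¹ * M) z ∈ B M')

/-- The basic logarithmic `m`-form
`(dr_{i₁}/r_{i₁}) ∧ ⋯ ∧ (dr_{i_k}/r_{i_k}) ∧ dx_{j₁} ∧ ⋯ ∧ dx_{j_{m-k}}`
(`P = {i₁ < ⋯ < i_k}`, `Q = {j₁ < ⋯ < j_{m-k}}`) evaluated at the point `z` on the
vectors `v`. -/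
def logTerm (p q : ℕ) (m : ℕ) (P : Finset (Fin p)) (Q : Finset (Fin q))
    (z : Euc (Fin p ⊕ Fin q)) (v : Fin m → Euc (Fin p ⊕ Fin q)) : ℝ :=
  Matrix.det (Matrix.of fun l k : Fin m =>
    if hl : (l : ℕ) < P.card then
      v k (Sum.inl ((P.orderIsoOfFin rfl) ⟨l, hl⟩)) /
        z (Sum.inl ((P.orderIsoOfFin rfl) ⟨l, hl⟩))
    else if hq : (l : ℕ) - P.card < Q.card then
      v k (Sum.inr ((Q.orderIsoOfFin rfl) ⟨(l : ℕ) - P.card, hq⟩))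
    else 0)

/-- An `m`-form on `ℝ^p × ℝ^q` with logarithmic singularities along the hyperplanes
`{r_i = 0}`: away from these hyperplanes it is a sum of basic logarithmic forms with
coefficients smooth on all of `ℝ^p × ℝ^q`. -/
def IsLogForm (p q : ℕ) (m : ℕ)
    (ω : Euc (Fin p ⊕ Fin q) → (Fin m → Euc (Fin p ⊕ Fin q)) → ℝ) : Prop :=
  ∃ a : Finset (Fin p) × Finset (Fin q) → Euc (Fin p ⊕ Fin q) → ℝ,
    (∀ s, ContDiff ℝ ((⊤ : ℕ∞) : WithTop ℕ∞) (a s)) ∧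
    ∀ z, (∀ i : Fin p, z (Sum.inl i) ≠ 0) → ∀ v,
      ω z v = ∑ s ∈ Finset.univ.filter
          (fun s : Finset (Fin p) × Finset (Fin q) => s.1.card + s.2.card = m),
        a s z * logTerm p q m s.1 s.2 z v

section Projections
variable {p q' : ℕ}

/-- The projection `ℝ^p × ℝ^{q'+1} → ℝ^p × ℝ^{q'}` forgetting the last coordinate `x_n`. -/
def pr1 (z : Euc (Fin p ⊕ Fin (q' + 1))) : Euc (Fin p ⊕ Fin q') :=
  WithLp.toLp 2 (Sum.elim (fun i => z (Sum.inl i)) fun j => z (Sum.inr j.castSucc))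

/-- The projection `ℝ^p × ℝ^{q'} → ℝ^p` onto the first group of coordinates. -/
def pr2 (w : Euc (Fin p ⊕ Fin q')) : Euc (Fin p) := WithLp.toLp 2 (fun i => w (Sum.inl i))

/-- Adjoining a value of the last coordinate `x_n`. -/
def combineLast (w : Euc (Fin p ⊕ Fin q')) (s : ℝ) : Euc (Fin p ⊕ Fin (q' + 1)) :=
  WithLp.toLp 2 (Sum.elim (fun i => w (Sum.inl i)) fun j =>
    if h : (j : ℕ) < q' then w (Sum.inr ⟨j, h⟩) else s)

/-- The linear change of variables `x_i ↦ x_i + c_i x_n` (`p < i < n`), `x_n ↦ x_n`. -/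
def lc (c : Fin q' → ℝ) (z : Euc (Fin p ⊕ Fin (q' + 1))) : Euc (Fin p ⊕ Fin (q' + 1)) :=
  WithLp.toLp 2 (Sum.elim (fun i => z (Sum.inl i)) fun j =>
    if h : (j : ℕ) < q' then z (Sum.inr j) + c ⟨j, h⟩ * z (Sum.inr (Fin.last q')) else
      z (Sum.inr j))

/-- Condition (F): over the neighbourhood `V₀ = {|r_i| < ρ₀}` of the origin, the projection
forgetting `x_n`, restricted to `A ∩ {r_i = 0}`, has finite fibres (for each `i`). -/
def ConditionF (p q' : ℕ) (ρ₀ : ℝ) (A : Set (Euc (Fin p ⊕ Fin (q' + 1)))) : Prop :=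
  ∀ i : Fin p, ∀ w : Euc (Fin p ⊕ Fin q'), (∀ i' : Fin p, |w (Sum.inl i')| < ρ₀) →
    {z | z ∈ A ∧ z (Sum.inl i) = 0 ∧ pr1 z = w}.Finite

/-- `v(A|x_n; r)`: the supremum, over the points `T` of `ℝ^{n-1}` lying over `r ∈ ℝ^p`, of
the Lebesgue measure (with respect to `dx_n`) of the fibre of `A` over `T`. -/
def vfun (A : Set (Euc (Fin p ⊕ Fin (q' + 1)))) (r : Euc (Fin p)) : ℝ≥0∞ :=
  ⨆ w : {w : Euc (Fin p ⊕ Fin q') // pr2 w = r},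
    volume {s : ℝ | combineLast w.1 s ∈ A}

end Projections

/-- A Zariski open subset of `ℝ^ι`. -/
def IsZariskiOpen (W : Set (Euc ι)) : Prop :=
  ∃ T : Set (MvPolynomial ι ℝ),
    W = {x | ∃ f ∈ T, MvPolynomial.eval (fun i => x i) f ≠ 0}

/-- The set of points of `V` that are nonsingular in dimension `d`: near such a point, `V`
is cut out by `card ι − d` polynomials vanishing on `V` whose gradients at the point are
linearly independent. -/
def RegPts (d : ℕ) (V : Set (Euc ι)) : Set (Euc ι) :=
  {x | x ∈ V ∧ ∃ f : Fin (Fintype.card ι - d) → MvPolynomial ι ℝ,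
    (∀ j, f j ∈ vanishingIdeal V) ∧
    (∃ O : Set (Euc ι), IsOpen O ∧ x ∈ O ∧
      V ∩ O = {y | y ∈ O ∧ ∀ j, MvPolynomial.eval (fun i => y i) (f j) = 0}) ∧
    LinearIndependent ℝ
      (fun j => (WithLp.toLp 2 (fun i => MvPolynomial.eval (fun i' => x i')
        (MvPolynomial.pderiv i (f j))) : Euc ι))}

/-- The standard `m`-simplex `Δ^m ⊆ ℝ^m`. -/
def simplex (m : ℕ) : Set (Euc (Fin m)) := {x | (∀ i, 0 ≤ x i) ∧ ∑ i, x i ≤ 1}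

/-- The relative interior of the face of `Δ^m` given by the vanishing of the coordinates in
`J` and (if `b = true`) the equation `∑ x_i = 1`. -/
def relintFace (m : ℕ) (J : Finset (Fin m)) (b : Bool) : Set (Euc (Fin m)) :=
  {x | (∀ i ∈ J, x i = 0) ∧ (∀ i ∉ J, 0 < x i) ∧
    (if b then ∑ i, x i = 1 else ∑ i, x i < 1)}

/-- The vertices of `Δ^m`: `vert m 0 = 0` and `vert m (t+1) = e_t`. -/
def vert (m : ℕ) (t : Fin (m + 1)) : Euc (Fin m) :=
  WithLp.toLp 2 (fun i => if (i : ℕ) + 1 = (t : ℕ) then 1 else 0)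

/-- Barycentric coordinates of a point of `Δ^k`. -/
def bary {k : ℕ} (y : Euc (Fin k)) (l : Fin (k + 1)) : ℝ :=
  if h : (l : ℕ) = 0 then 1 - ∑ i, y i else y ⟨(l : ℕ) - 1, by have := l.isLt; omega⟩

/-- The `j`-th affine face map `Δ^k → Δ^{k+1}` (omitting the `j`-th vertex). -/
def faceMap (k : ℕ) (j : Fin (k + 2)) (y : Euc (Fin k)) : Euc (Fin (k + 1)) :=
  WithLp.toLp 2 (fun i => ∑ l : Fin (k + 1), bary y l * vert (k + 1) (j.succAbove l) i)

/-- The exterior derivative of a `k`-form (with smooth coefficients). -/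
def extDeriv (k : ℕ) (ψ : Euc ι → (Fin k → Euc ι) → ℝ) :
    Euc ι → (Fin (k + 1) → Euc ι) → ℝ :=
  fun x v => ∑ j : Fin (k + 1), (-1 : ℝ) ^ (j : ℕ) *
    fderiv ℝ (fun y => ψ y fun i => v (j.succAbove i)) x (v j)

/-- Adjoining a parameter value as an extra coordinate. -/
def pair {m : ℕ} (x : Euc (Fin m)) (t : ℝ) : Euc (Fin m ⊕ Fin 1) :=
  WithLp.toLp 2 (Sum.elim (fun i => x i) fun _ => t)

/-- `ℂ^n` identified with `ℝ^n × ℝ^n`: the `k`-th complex coordinate of the real point. -/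
def cxVec (n : ℕ) (w : Euc (Fin n ⊕ Fin n)) (k : Fin n) : ℂ :=
  Complex.ofReal (w (Sum.inl k)) + Complex.I * Complex.ofReal (w (Sum.inr k))

/-- The face `ℍ_I = {z_i = 0, i ∈ I}` of `ℂ^n`. -/
def cxFace (n : ℕ) (I : Finset (Fin n)) : Set (Euc (Fin n ⊕ Fin n)) :=
  {w | ∀ i ∈ I, cxVec n w i = 0}

/-- The divisor `D = ⋃ {z_k = 1}` of `ℂ^n`. -/
def cxD (n : ℕ) : Set (Euc (Fin n ⊕ Fin n)) :=
  {w | ∃ k : Fin n, cxVec n w k = 1}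

/-- `m`-admissibility of a closed semi-algebraic subset of `ℂ^n`:
`dim (A ∩ ℍ_I ∩ (ℂ^n − D)) ≤ m − 2|I|` for every `I`. -/
def mAdmissible (n m : ℕ) (A : Set (Euc (Fin n ⊕ Fin n))) : Prop :=
  ∀ I : Finset (Fin n),
    dim (A ∩ cxFace n I ∩ (cxD n)ᶜ) + (((2 * I.card : ℕ) : ℕ∞) : WithBot ℕ∞) ≤
      ((m : ℕ∞) : WithBot ℕ∞)

/-- The polar-coordinate parametrisation of the sector `i^α · ℂ₊`:
`(r, τ) ↦ i^α · (r/√(τ²+1)) · (1 + iτ)`. -/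
def polarC (α : ℕ) (r τ : ℝ) : ℂ :=
  Complex.I ^ α *
    (Complex.ofReal (r / Real.sqrt (τ ^ 2 + 1)) +
      Complex.I * Complex.ofReal (r * τ / Real.sqrt (τ ^ 2 + 1)))

/-- The product polar-coordinate map `π : C̃₊ⁿ → ℂⁿ` (in real coordinates), the `k`-th
factor landing in the sector of index `α k`. -/
def polarMap (n : ℕ) (α : Fin n → ℕ) (w : Euc (Fin n ⊕ Fin n)) : Euc (Fin n ⊕ Fin n) :=
  WithLp.toLp 2 (Sum.elim (fun k => (polarC (α k) (w (Sum.inl k)) (w (Sum.inr k))).re)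
    fun k => (polarC (α k) (w (Sum.inl k)) (w (Sum.inr k))).im)

/-- `C̃₊ⁿ = (ℝ_{≥0} × [−1,1])ⁿ`. -/
def tildeDomain (n : ℕ) : Set (Euc (Fin n ⊕ Fin n)) :=
  {w | ∀ k : Fin n, 0 ≤ w (Sum.inl k) ∧ |w (Sum.inr k)| ≤ 1}

/-- The map `q = q_{P,Q,R}` recording the coordinates `r_i (i ∈ P)`, `τ_j (j ∈ Q)` and
`(r_k, τ_k) (k ∈ R)`. -/
def qMap (n : ℕ) (P Q R : Finset (Fin n)) (w : Euc (Fin n ⊕ Fin n)) :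
    Euc (↥P ⊕ (↥Q ⊕ (↥R ⊕ ↥R))) :=
  WithLp.toLp 2 (Sum.elim (fun i => w (Sum.inl i.1))
    (Sum.elim (fun j => w (Sum.inr j.1))
      (Sum.elim (fun k => w (Sum.inl k.1)) fun k => w (Sum.inr k.1))))

/-- The basic complex logarithmic form `(dz₁/z₁ ∧ ⋯ ∧ dz_n/z_n) ∧ ⋀_{k∈R} dz̄_k`
evaluated at `z` on the (real) tangent vectors `v`. -/
def cxLogTerm (n m : ℕ) (R : Finset (Fin n)) (z : Euc (Fin n ⊕ Fin n))
    (v : Fin m → Euc (Fin n ⊕ Fin n)) : ℂ :=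
  Matrix.det (Matrix.of fun l k : Fin m =>
    if hl : (l : ℕ) < n then
      cxVec n (v k) ⟨l, hl⟩ / cxVec n z ⟨l, hl⟩
    else if hr : (l : ℕ) - n < R.card then
      starRingEnd ℂ (cxVec n (v k) ((R.orderIsoOfFin rfl) ⟨(l : ℕ) - n, hr⟩))
    else 0)

/-- An `(n, m−n)`-form on `ℂ^n` with logarithmic singularities along the coordinate
hyperplanes: a linear combination, with coefficients smooth functions on `ℂ^n`, of the
forms `(dz₁/z₁ ∧ ⋯ ∧ dz_n/z_n) ∧ ⋀_{k∈R} dz̄_k` with `|R| = m − n`. -/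
def IsCxLogForm (n m : ℕ)
    (ω : Euc (Fin n ⊕ Fin n) → (Fin m → Euc (Fin n ⊕ Fin n)) → ℂ) : Prop :=
  ∃ a : Finset (Fin n) → Euc (Fin n ⊕ Fin n) → ℂ,
    (∀ R, ContDiff ℝ ((⊤ : ℕ∞) : WithTop ℕ∞) (a R)) ∧
    ∀ z, (∀ k : Fin n, cxVec n z k ≠ 0) → ∀ v,
      ω z v = ∑ R ∈ Finset.univ.filter (fun R : Finset (Fin n) => R.card = m - n),
        a R z * cxLogTerm n m R z v

/-- The integral of the density `|φ|` of a complex-valued `m`-form over `U`. -/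
def absIntegralC (m : ℕ) (U : Set (Euc ι)) (φ : Euc ι → (Fin m → Euc ι) → ℂ) : ℝ≥0∞ :=
  ∫⁻ x in U, ENNReal.ofReal (⨆ v ∈ tangentFrames m U x, ‖φ x v‖) ∂μH[(m : ℝ)]

/-- The substitution homomorphism of the chart with exponent matrix `M`:
`x_i ↦ ∏_j x_j^{M i j}` on the first `p` variables. -/
def chartHom (k : Type) [CommSemiring k] (p q : ℕ) (M : Matrix (Fin p) (Fin p) ℤ) :
    MvPolynomial (Fin p ⊕ Fin q) k →ₐ[k] MvPolynomial (Fin p ⊕ Fin q) k :=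
  MvPolynomial.aeval (Sum.elim
    (fun i => ∏ j : Fin p,
      (MvPolynomial.X (Sum.inl j) : MvPolynomial (Fin p ⊕ Fin q) k) ^ (M i j).toNat)
    fun j => MvPolynomial.X (Sum.inr j))

/-- The product of the first `p` variables. -/
def torusMon (k : Type) [CommSemiring k] (p q : ℕ) : MvPolynomial (Fin p ⊕ Fin q) k :=
  ∏ i : Fin p, MvPolynomial.X (Sum.inl i)

/-- The ideal of the strict transform, in the chart with exponent matrix `M`, of the
subvariety cut out by `P`: the saturation, with respect to the exceptional coordinates, of
the image of `P` under the chart substitution. -/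
def strictIdeal (k : Type) [CommRing k] (p q : ℕ) (M : Matrix (Fin p) (Fin p) ℤ)
    (P : Ideal (MvPolynomial (Fin p ⊕ Fin q) k)) :
    Ideal (MvPolynomial (Fin p ⊕ Fin q) k) where
  carrier := {f | ∃ N : ℕ, torusMon k p q ^ N * f ∈ Ideal.map (chartHom k p q M) P}
  zero_mem' := ⟨0, by simp⟩
  add_mem' := by
    rintro a b ⟨Na, ha⟩ ⟨Nb, hb⟩
    refine ⟨Na + Nb, ?_⟩
    have h1 : torusMon k p q ^ (Na + Nb) * (a + b)
        = torusMon k p q ^ Nb * (torusMon k p q ^ Na * a)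
          + torusMon k p q ^ Na * (torusMon k p q ^ Nb * b) := by ring
    rw [h1]
    exact Ideal.add_mem _ (Ideal.mul_mem_left _ _ ha) (Ideal.mul_mem_left _ _ hb)
  smul_mem' := by
    rintro c a ⟨N, ha⟩
    refine ⟨N, ?_⟩
    have h1 : torusMon k p q ^ N * (c • a) = c * (torusMon k p q ^ N * a) := by
      rw [smul_eq_mul]; ring
    rw [h1]
    exact Ideal.mul_mem_left _ _ ha

/-- The ideal of the face `{x_i = 0, i ∈ I}`. -/
def faceIdeal (k : Type) [CommSemiring k] (p q : ℕ) (I : Finset (Fin p)) :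
    Ideal (MvPolynomial (Fin p ⊕ Fin q) k) :=
  Ideal.span ((fun i => (MvPolynomial.X (Sum.inl i) : MvPolynomial (Fin p ⊕ Fin q) k)) '' I)

end SA

/-! If `ξ' - ξ` stayed `≥ ε` along a filter converging to a point `P` of a hyperplane `r_i = 0`,
then passing to an ultrafilter and using compactness of `closure A`, the values of `ξ` and `ξ'`
converge to some `a ≤ b - ε`, and every point `(P, s)` with `a ≤ s ≤ b` is a limit of points of
`A`. The fibre of `closure A ∩ {r_i = 0}` over `P` then contains a whole segment, contradicting
Condition (F). The uniform statement (2) follows from (1) by the same compactness, applied to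
the points `Q` themselves. -/

open Filter

lemma IsCompact.exists_tendsto_of_ultrafilter {α X : Type*} [TopologicalSpace X] {K : Set X}
    (hK : IsCompact K) (U : Ultrafilter α) {f : α → X} (hf : ∀ᶠ x in U, f x ∈ K) :
    ∃ x, Tendsto f U (𝓝 x) :=
  let ⟨x, _, hx⟩ := hK.ultrafilter_le_nhds' (U.map f) (Ultrafilter.mem_map.2 hf)
  ⟨x, hx⟩

namespace SA

variable {p q' : ℕ}

@[simp]
lemma combineLast_last (w : Euc (Fin p ⊕ Fin q')) (s : ℝ) :
    combineLast w s (Sum.inr (Fin.last q')) = s := by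
  simp [combineLast]

@[simp]
lemma pr1_combineLast (w : Euc (Fin p ⊕ Fin q')) (s : ℝ) : pr1 (combineLast w s) = w := by
  ext (i | j)
  · rfl
  · simp [pr1, combineLast]

lemma continuous_combineLast :
    Continuous fun ws : Euc (Fin p ⊕ Fin q') × ℝ => combineLast ws.1 ws.2 := by
  refine (PiLp.continuous_toLp 2 _).comp (continuous_pi fun c => ?_)
  rcases c with i | j
  · exact (EuclideanSpace.proj (Sum.inl i)).continuous.comp continuous_fst
  · by_cases h : (j : ℕ) < q'
    · simp only [Sum.elim_inr, h, dite_true]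
      exact (EuclideanSpace.proj _).continuous.comp continuous_fst
    · simp only [Sum.elim_inr, h, dite_false]
      exact continuous_snd

lemma continuous_pr1 : Continuous (pr1 : Euc (Fin p ⊕ Fin (q' + 1)) → Euc (Fin p ⊕ Fin q')) :=
  (PiLp.continuous_toLp 2 _).comp (continuous_pi fun c => by
    rcases c with i | j
    exacts [(EuclideanSpace.proj _).continuous, (EuclideanSpace.proj _).continuous])

lemma combineLast_injective (w : Euc (Fin p ⊕ Fin q')) : Function.Injective (combineLast w) :=
  fun s t h => by simpa using congrArg (· (Sum.inr (Fin.last q'))) h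

/-- The set `[ξ, ξ']` of the paper. -/
def betweenGraphs (B : Set (Euc (Fin p ⊕ Fin q'))) (ξ ξ' : Euc (Fin p ⊕ Fin q') → ℝ) :
    Set (Euc (Fin p ⊕ Fin (q' + 1))) :=
  {z | pr1 z ∈ B ∧ ξ (pr1 z) ≤ z (Sum.inr (Fin.last q')) ∧ z (Sum.inr (Fin.last q')) ≤ ξ' (pr1 z)}

@[simp]
lemma combineLast_mem_betweenGraphs {B : Set (Euc (Fin p ⊕ Fin q'))}
    {ξ ξ' : Euc (Fin p ⊕ Fin q') → ℝ} {w : Euc (Fin p ⊕ Fin q')} {s : ℝ} :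
    combineLast w s ∈ betweenGraphs B ξ ξ' ↔ w ∈ B ∧ ξ w ≤ s ∧ s ≤ ξ' w := by
  simp [betweenGraphs]

lemma ConditionF.le_of_forall_combineLast_mem {ρ₀ : ℝ} {K : Set (Euc (Fin p ⊕ Fin (q' + 1)))}
    (hF : ConditionF p q' ρ₀ K) {P : Euc (Fin p ⊕ Fin q')} {i : Fin p}
    (hPi : P (Sum.inl i) = 0) (hPρ : ∀ j, |P (Sum.inl j)| < ρ₀) {a b : ℝ}
    (hab : ∀ s ∈ Icc a b, combineLast P s ∈ K) : b ≤ a := by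
  by_contra! h
  refine (Set.infinite_image_iff (combineLast_injective P).injOn).2 (Set.Icc_infinite h)
    ((hF i P hPρ).subset ?_)
  rintro _ ⟨s, hs, rfl⟩
  exact ⟨hab s hs, hPi, pr1_combineLast P s⟩

section Graphs

variable {B : Set (Euc (Fin p ⊕ Fin q'))} {ξ ξ' : Euc (Fin p ⊕ Fin q') → ℝ}

lemma exists_tendsto_graphs_of_ultrafilter (hK : IsCompact (closure (betweenGraphs B ξ ξ')))
    (U : Ultrafilter (Euc (Fin p ⊕ Fin q'))) (hU : ∀ᶠ w in U, w ∈ B ∧ ξ w ≤ ξ' w) :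
    ∃ P a b, (U : Filter (Euc (Fin p ⊕ Fin q'))) ≤ 𝓝 P ∧
      Tendsto ξ U (𝓝 a) ∧ Tendsto ξ' U (𝓝 b) := by
  set K := closure (betweenGraphs B ξ ξ')
  have hgraphs : ∀ᶠ w in U, combineLast w (ξ w) ∈ K ∧ combineLast w (ξ' w) ∈ K :=
    hU.mono fun w ⟨hw, hle⟩ => ⟨subset_closure (by simp [hw, hle]),
      subset_closure (by simp [hw, hle])⟩
  have hlast :=
    hK.image (EuclideanSpace.proj (Sum.inr (Fin.last q') : Fin p ⊕ Fin (q' + 1))).continuous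
  obtain ⟨P, hP⟩ := (hK.image continuous_pr1).exists_tendsto_of_ultrafilter U
    (f := id) (hgraphs.mono fun w h => ⟨_, h.1, pr1_combineLast w _⟩)
  obtain ⟨a, ha⟩ := hlast.exists_tendsto_of_ultrafilter U
    (hgraphs.mono fun w h => ⟨_, h.1, combineLast_last w _⟩)
  obtain ⟨b, hb⟩ := hlast.exists_tendsto_of_ultrafilter U
    (hgraphs.mono fun w h => ⟨_, h.2, combineLast_last w _⟩)
  exact ⟨P, a, b, hP, ha, hb⟩

lemma combineLast_mem_closure_betweenGraphs {l : Filter (Euc (Fin p ⊕ Fin q'))} [l.NeBot]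
    (hl : ∀ᶠ w in l, w ∈ B ∧ ξ w ≤ ξ' w) {P : Euc (Fin p ⊕ Fin q')} {a b s : ℝ}
    (hP : l ≤ 𝓝 P) (ha : Tendsto ξ l (𝓝 a)) (hb : Tendsto ξ' l (𝓝 b)) (hs : s ∈ Icc a b) :
    combineLast P s ∈ closure (betweenGraphs B ξ ξ') := by
  -- `(w, s)` with `s` clamped into `[ξ w, ξ' w]` lies in the region and tends to `(P, s)`
  have hclamp : Tendsto (fun w => max (ξ w) (min s (ξ' w))) l (𝓝 s) := by
    have := ha.max ((tendsto_const_nhds (x := s)).min hb)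
    rwa [min_eq_left hs.2, max_eq_right hs.1] at this
  refine mem_closure_of_tendsto
    ((continuous_combineLast.tendsto (P, s)).comp ((tendsto_id'.2 hP).prodMk_nhds hclamp)) ?_
  exact hl.mono fun w ⟨hw, hle⟩ => combineLast_mem_betweenGraphs.2
    ⟨hw, le_max_left _ _, max_le hle (min_le_right _ _)⟩

theorem tendsto_sub_nhdsWithin_of_conditionF {ρ₀ : ℝ}
    (hK : IsCompact (closure (betweenGraphs B ξ ξ')))
    (hF : ConditionF p q' ρ₀ (closure (betweenGraphs B ξ ξ')))
    (hle : ∀ w ∈ B, ξ w ≤ ξ' w) {P : Euc (Fin p ⊕ Fin q')} {i : Fin p}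
    (hPi : P (Sum.inl i) = 0) (hPρ : ∀ j, |P (Sum.inl j)| < ρ₀) :
    Tendsto (fun w => ξ' w - ξ w) (𝓝[B] P) (𝓝 0) := by
  by_contra hnot
  rw [Metric.tendsto_nhds] at hnot
  push Not at hnot
  obtain ⟨ε, hε, hfreq⟩ := hnot
  have := frequently_iff_neBot.1 hfreq
  have hU := Ultrafilter.of_le (𝓝[B] P ⊓ 𝓟 {w | ε ≤ dist (ξ' w - ξ w) 0})
  set U := Ultrafilter.of (𝓝[B] P ⊓ 𝓟 {w | ε ≤ dist (ξ' w - ξ w) 0})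
  have hUP : (U : Filter (Euc (Fin p ⊕ Fin q'))) ≤ 𝓝[B] P := hU.trans inf_le_left
  have hUB : ∀ᶠ w in U, w ∈ B ∧ ξ w ≤ ξ' w :=
    Eventually.mono (hUP self_mem_nhdsWithin) fun w hw => ⟨hw, hle w hw⟩
  have hfar : ∀ᶠ w in U, ε ≤ dist (ξ' w - ξ w) 0 := (hU.trans inf_le_right) (mem_principal_self _)
  have hgap : ∀ᶠ w in U, ε ≤ ξ' w - ξ w := (hfar.and hUB).mono fun w ⟨hw, _, hwle⟩ => by
    rwa [Real.dist_eq, sub_zero, abs_of_nonneg (sub_nonneg.2 hwle)] at hw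
  obtain ⟨-, a, b, -, ha, hb⟩ := exists_tendsto_graphs_of_ultrafilter hK U hUB
  have hab : ε ≤ b - a := ge_of_tendsto (hb.sub ha) hgap
  have hba : b ≤ a := hF.le_of_forall_combineLast_mem hPi hPρ fun s hs =>
    combineLast_mem_closure_betweenGraphs hUB (hUP.trans nhdsWithin_le_nhds) ha hb hs
  linarith

theorem exists_delta_of_conditionF {ρ₀ ρ ε : ℝ}
    (hK : IsCompact (closure (betweenGraphs B ξ ξ')))
    (hF : ConditionF p q' ρ₀ (closure (betweenGraphs B ξ ξ')))
    (hle : ∀ w ∈ B, ξ w ≤ ξ' w) (hρ₀ : 0 < ρ₀) (hρ : ρ < ρ₀) (i : Fin p) (hε : 0 < ε) :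
    ∃ δ, 0 < δ ∧ δ < ρ₀ ∧ ∀ Q ∈ B, (∀ j, |Q (Sum.inl j)| ≤ ρ) →
      |Q (Sum.inl i)| < δ → ξ' Q - ξ Q < ε := by
  by_contra! hnot
  set S : Set (Euc (Fin p ⊕ Fin q')) := {Q | Q ∈ B ∧ (∀ j, |Q (Sum.inl j)| ≤ ρ) ∧ ε ≤ ξ' Q - ξ Q}
  set l := comap (fun Q : Euc (Fin p ⊕ Fin q') => Q (Sum.inl i)) (𝓝 0) ⊓ 𝓟 S
  have : l.NeBot := (Metric.nhds_basis_ball.comap _).inf_principal_neBot_iff.2 fun δ hδ => by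
    obtain ⟨Q, hQB, hQρ, hQi, hQε⟩ :=
      hnot (min δ (ρ₀ / 2)) (by positivity) ((min_le_right _ _).trans_lt (by linarith))
    exact ⟨Q, by simpa using hQi.trans_le (min_le_left _ _), hQB, hQρ, hQε⟩
  have hU := Ultrafilter.of_le l
  set U := Ultrafilter.of l
  have hS : ∀ᶠ Q in U, Q ∈ S := (hU.trans inf_le_right) (mem_principal_self S)
  obtain ⟨P, -, -, hP, -, -⟩ :=
    exists_tendsto_graphs_of_ultrafilter hK U (hS.mono fun Q hQ => ⟨hQ.1, hle Q hQ.1⟩)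
  have hcoord (j : Fin p) :
      Tendsto (fun Q : Euc (Fin p ⊕ Fin q') => Q (Sum.inl j)) U (𝓝 (P (Sum.inl j))) :=
    ((EuclideanSpace.proj (Sum.inl j : Fin p ⊕ Fin q')).continuous.tendsto P).comp
      (tendsto_id'.2 hP)
  have hPi : P (Sum.inl i) = 0 :=
    tendsto_nhds_unique (hcoord i) (tendsto_comap.mono_left (hU.trans inf_le_left))
  have hPρ (j : Fin p) : |P (Sum.inl j)| < ρ₀ :=
    (le_of_tendsto (hcoord j).abs (hS.mono fun Q hQ => hQ.2.1 j)).trans_lt hρ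
  have hUP : Tendsto id U (𝓝[B] P) := tendsto_nhdsWithin_iff.2 ⟨hP, hS.mono fun Q hQ => hQ.1⟩
  have := ge_of_tendsto ((tendsto_sub_nhdsWithin_of_conditionF hK hF hle hPi hPρ).comp hUP)
    (hS.mono fun Q hQ => hQ.2.2)
  linarith

end Graphs

end SA

theorem statement_13_general (p q' : ℕ) (ρ₀ : ℝ)
    (A : Set (Euc (Fin p ⊕ Fin (q' + 1))))
    (hcl : IsCompact (closure A)) (hF : SA.ConditionF p q' ρ₀ (closure A))
    (B : Set (Euc (Fin p ⊕ Fin q')))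
    (ξ ξ' : Euc (Fin p ⊕ Fin q') → ℝ)
    (hlt : ∀ w ∈ B, ξ w < ξ' w)
    (hAeq : A = {z | SA.pr1 z ∈ B ∧ ξ (SA.pr1 z) ≤ z (Sum.inr (Fin.last q')) ∧
      z (Sum.inr (Fin.last q')) ≤ ξ' (SA.pr1 z)}) :
    (∀ P : Euc (Fin p ⊕ Fin q'), P ∈ closure B → (∃ i : Fin p, P (Sum.inl i) = 0) →
      (∀ i : Fin p, |P (Sum.inl i)| < ρ₀) →
      Filter.Tendsto (fun Q => ξ' Q - ξ Q) (nhdsWithin P B) (nhds 0)) ∧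
    (∀ ρ : ℝ, 0 < ρ → ρ < ρ₀ → ∀ i : Fin p, ∀ ε : ℝ, 0 < ε →
      ∃ δ : ℝ, 0 < δ ∧ δ < ρ₀ ∧
        ∀ Q ∈ B, (∀ j : Fin p, |Q (Sum.inl j)| ≤ ρ) →
          0 < |Q (Sum.inl i)| → |Q (Sum.inl i)| < δ → ξ' Q - ξ Q < ε) := by
  obtain rfl : A = SA.betweenGraphs B ξ ξ' := hAeq
  have hle : ∀ w ∈ B, ξ w ≤ ξ' w := fun w hw => (hlt w hw).le
  refine ⟨fun P _ ⟨i, hPi⟩ hPρ => SA.tendsto_sub_nhdsWithin_of_conditionF hcl hF hle hPi hPρ,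
    fun ρ hρ hρρ₀ i ε hε => ?_⟩
  obtain ⟨δ, hδ, hδρ₀, hsmall⟩ :=
    SA.exists_delta_of_conditionF hcl hF hle (hρ.trans hρρ₀) hρρ₀ i hε
  exact ⟨δ, hδ, hδρ₀, fun Q hQ hQρ _ hQδ => hsmall Q hQ hQρ hQδ⟩

/-- Let `A ⊆ ℝ^p × ℝ^{n−p}` (`p < n`, `n − p = q' + 1`) be a
semi-algebraic set such that (i) its closure is compact and satisfies Condition (F) with
parameter `ρ₀`, and (ii) `A = [ξ, ξ']` is the set of points lying over `B ⊆ ℝ^{n−1}`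
with `ξ ≤ x_n ≤ ξ'`, for continuous semi-algebraic functions `ξ < ξ'` on `B`. Then:
(1) for every `P ∈ B̄ ∩ (H₁ ∪ ⋯ ∪ H_p) ∩ pr₂⁻¹(V₀)`, `(ξ' − ξ)(Q) → 0` as `Q ∈ B`
tends to `P`; and (2) for every `0 < ρ < ρ₀`, every `i` and every `ε > 0` there is
`0 < δ < ρ₀` such that for `Q ∈ B ∩ pr₂⁻¹({|r_j| ≤ ρ ∀ j})`, `0 < |r_i(Q)| < δ` implies
`(ξ' − ξ)(Q) < ε`. -/
theorem statement_13 (p q' : ℕ) (ρ₀ : ℝ) (hρ₀ : 0 < ρ₀)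
    (A : Set (Euc (Fin p ⊕ Fin (q' + 1)))) (hsa : SA.IsSemialgebraic A)
    (hcl : IsCompact (closure A)) (hF : SA.ConditionF p q' ρ₀ (closure A))
    (B : Set (Euc (Fin p ⊕ Fin q'))) (hB : SA.IsSemialgebraic B)
    (ξ ξ' : Euc (Fin p ⊕ Fin q') → ℝ)
    (hξc : ContinuousOn ξ B) (hξ'c : ContinuousOn ξ' B)
    (hξsa : SA.IsSemialgebraicFunOn B ξ) (hξ'sa : SA.IsSemialgebraicFunOn B ξ')
    (hlt : ∀ w ∈ B, ξ w < ξ' w)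
    (hAeq : A = {z | SA.pr1 z ∈ B ∧ ξ (SA.pr1 z) ≤ z (Sum.inr (Fin.last q')) ∧
      z (Sum.inr (Fin.last q')) ≤ ξ' (SA.pr1 z)}) :
    (∀ P : Euc (Fin p ⊕ Fin q'), P ∈ closure B → (∃ i : Fin p, P (Sum.inl i) = 0) →
      (∀ i : Fin p, |P (Sum.inl i)| < ρ₀) →
      Filter.Tendsto (fun Q => ξ' Q - ξ Q) (nhdsWithin P B) (nhds 0)) ∧
    (∀ ρ : ℝ, 0 < ρ → ρ < ρ₀ → ∀ i : Fin p, ∀ ε : ℝ, 0 < ε →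
      ∃ δ : ℝ, 0 < δ ∧ δ < ρ₀ ∧
        ∀ Q ∈ B, (∀ j : Fin p, |Q (Sum.inl j)| ≤ ρ) →
          0 < |Q (Sum.inl i)| → |Q (Sum.inl i)| < δ → ξ' Q - ξ Q < ε) :=
  statement_13_general p q' ρ₀ A hcl hF B ξ ξ' hlt hAeq
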